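/- Let T ⊆ 2^{<ω} be a tree (a set of finite binary strings closed under initial segments). Let X_T be the disjoint union of the set ⋃_n (2^n × 2^n) of pairs of binary strings of equal length and the set 2^ω × 2^ω of pairs of infinite binary sequences, and let G_T be the graph on X_T relating a pair (t, s) ∈ 2^n × 2^n to a pair (u, v) ∈ 2^ω × 2^ω if and only if t ∈ T, n ≥ 1, the last entry of t is 1, t = u↾n, and s = v↾n. Then G_T has countable coloring number if and only if there is no x ∈ 2^ω such that x↾n ∈ T for all n and x(n) = 1 for infinitely many n. -/

import Mathlib

open Set

/-- `G` has countable coloring number: there is an orientation `o` of `G`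
(an antisymmetric relation whose symmetrization is `G`) such that the
outflow of every vertex is finite. -/
def CountableColoringNumber {X : Type*} (G : X → X → Prop) : Prop :=
  ∃ o : X → X → Prop, (∀ x y, o x y → o y x → x = y) ∧
    (∀ x y, G x y ↔ (o x y ∨ o y x)) ∧ (∀ x, {y | o x y}.Finite)

/-- The restriction `u↾n` of an infinite binary sequence, as a binary string. -/
def restr (u : ℕ → Bool) (n : ℕ) : List Bool :=
  List.ofFn fun i : Fin n => u i

/-- Pairs of finite binary strings of equal length: the set `⋃ₙ (2ⁿ × 2ⁿ)`. -/
abbrev EqLenPair : Type := {p : List Bool × List Bool // p.1.length = p.2.length}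

/-- The underlying set `X_T`: the disjoint union of `⋃ₙ (2ⁿ × 2ⁿ)` and `2^ω × 2^ω`. -/
abbrev XT : Type := EqLenPair ⊕ ((ℕ → Bool) × (ℕ → Bool))

/-- `(t, s)` is related to `(u, v)` iff `t ∈ T`, `t` has length `≥ 1` and
last entry `1`, `t = u↾n`, and `s = v↾n` where `n` is the length of `t`. -/
def RelT (T : Set (List Bool)) (p : EqLenPair) (q : (ℕ → Bool) × (ℕ → Bool)) : Prop :=
  p.1.1 ∈ T ∧ 1 ≤ p.1.1.length ∧ p.1.1.getLast? = some true ∧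
    p.1.1 = restr q.1 p.1.1.length ∧ p.1.2 = restr q.2 p.1.1.length

/-- The graph `G_T` on `X_T`. -/
def GT (T : Set (List Bool)) : XT → XT → Prop
  | .inl p, .inr q => RelT T p q
  | .inr q, .inl p => RelT T p q
  | _, _ => False

lemma restr_length (u : ℕ → Bool) (n : ℕ) : (restr u n).length = n := by simp [restr]

lemma restr_prefix (u : ℕ → Bool) {m n : ℕ} (h : m ≤ n) : restr u m <+: restr u n := by
  rw [List.prefix_iff_eq_take]
  apply List.ext_getElem (by simp [restr, h])
  intro i h1 h2
  simp [restr, List.getElem_take]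

lemma getLast?_restr (u : ℕ → Bool) {n : ℕ} (h : 1 ≤ n) :
    (restr u n).getLast? = some (u (n-1)) := by
  rw [List.getLast?_eq_getElem?]
  simp only [restr, List.length_ofFn, List.getElem?_ofFn]
  rw [dif_pos (by omega)]

lemma uncount (h : Countable (ℕ → Bool)) : False := by
  classical
  have hf : Function.Injective (fun (S : Set ℕ) (n : ℕ) => decide (n ∈ S)) := by
    intro S S' hss
    ext n
    simpa using congrFun hss n
  obtain ⟨g, hg⟩ := h.exists_injective_nat (ℕ → Bool)
  exact Function.cantor_injective _ (hg.comp hf)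

theorem stmt_10 (T : Set (List Bool))
    (htree : ∀ t ∈ T, ∀ s : List Bool, s <+: t → s ∈ T) :
    CountableColoringNumber (GT T) ↔
      ¬ ∃ x : ℕ → Bool, (∀ n : ℕ, restr x n ∈ T) ∧ {n : ℕ | x n = true}.Infinite := by
  constructor
  · rintro ⟨o, hanti, hsym, hfin⟩ ⟨x, hxT, hx1⟩
    classical
    set L : (ℕ → Bool) → ℕ → XT :=
      fun v n => Sum.inl ⟨(restr x n, restr v n), by simp [restr_length]⟩ with hLdef
    have hLinj : ∀ v, Function.Injective (L v) := by
      intro v a b h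
      have := congrArg (fun y : XT => match y with
        | Sum.inl p => p.1.1.length | Sum.inr _ => 0) h
      simpa [hLdef, restr_length] using this
    have hedge : ∀ (v : ℕ → Bool) (n : ℕ), 1 ≤ n → x (n-1) = true →
        GT T (Sum.inl ⟨(restr x n, restr v n), by simp [restr_length]⟩) (Sum.inr (x, v)) := by
      intro v n h1 hx
      refine ⟨hxT n, by simp [restr_length, h1], ?_, by simp [restr_length], by simp [restr_length]⟩
      rw [getLast?_restr x h1, hx]
    set B : (ℕ → Bool) → Set ℕ :=
      fun v => {n | 1 ≤ n ∧ x (n-1) = true ∧ o (Sum.inr (x, v)) (L v n)} with hBdef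
    have hB : ∀ v, (B v).Finite := by
      intro v
      refine ((hfin (Sum.inr (x, v))).preimage (hLinj v).injOn).subset ?_
      intro n hn
      exact hn.2.2
    set C : ℕ → Set (ℕ → Bool) := fun k => {v | ∀ n ∈ B v, n < k} with hCdef
    have hN : {n : ℕ | 1 ≤ n ∧ x (n-1) = true}.Infinite := by
      have hinj : Function.Injective (fun m : ℕ => m + 1) := fun a b h => by simpa using h
      refine (hx1.image hinj.injOn).mono ?_
      rintro m ⟨a, ha, rfl⟩
      exact ⟨Nat.succ_le_succ (Nat.zero_le a), by simpa using ha⟩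
    have hCfin : ∀ k, (C k).Finite := by
      intro k
      obtain ⟨n, hnN, hkn⟩ := hN.exists_gt k
      have key : ∀ v ∈ C k, o (L v n) (Sum.inr (x, v)) := by
        intro v hv
        have hg := hedge v n hnN.1 hnN.2
        rcases (hsym _ _).mp hg with h | h
        · exact h
        · exact absurd (hv n ⟨hnN.1, hnN.2, h⟩) (by omega)
      set P : Set EqLenPair := {p | p.1.1 = restr x n} with hPdef
      have hP : P.Finite := by
        have himg : ((fun p : EqLenPair => p.1.2) '' P).Finite := by
          refine (List.finite_length_eq Bool n).subset ?_
          rintro l ⟨p, hp, rfl⟩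
          have h2 := p.2
          simp only [hPdef, mem_setOf_eq] at hp
          simp only [mem_setOf_eq, ← h2, hp, restr_length]
        refine Set.Finite.of_finite_image himg ?_
        intro p hp p' hp' h
        simp only [hPdef, mem_setOf_eq] at hp hp'
        exact Subtype.ext (Prod.ext (hp.trans hp'.symm) h)
      have hPhi : Function.Injective (fun v : ℕ → Bool => (Sum.inr (x, v) : XT)) := by
        intro a b h
        simpa using h
      refine (((hP.biUnion (fun p _ => hfin (Sum.inl p))).preimage hPhi.injOn).subset ?_)
      intro v hv
      simp only [mem_preimage, mem_iUnion]
      exact ⟨⟨(restr x n, restr v n), by simp [restr_length]⟩, rfl, key v hv⟩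
    have hcountable : Countable (ℕ → Bool) := by
      rw [← Set.countable_univ_iff]
      refine (Set.countable_iUnion (fun k => (hCfin k).countable)).mono ?_
      intro v _
      obtain ⟨k, hk⟩ := (hB v).bddAbove
      exact mem_iUnion.mpr ⟨k + 1, fun n hn => by have := hk hn; omega⟩
    exact uncount hcountable
  · intro hno
    refine ⟨fun a b => ∃ p q, a = Sum.inr q ∧ b = Sum.inl p ∧ RelT T p q, ?_, ?_, ?_⟩
    · rintro a b ⟨p, q, rfl, rfl, -⟩ ⟨p', q', h, -⟩
      exact absurd h (by simp)
    · rintro (p | q) (p' | q')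
      · constructor
        · intro h; exact absurd h (by simp [GT])
        · rintro (⟨_, _, h, _⟩ | ⟨_, _, h, _⟩) <;> exact absurd h (by simp)
      · constructor
        · intro h
          exact Or.inr ⟨p, q', rfl, rfl, h⟩
        · rintro (⟨_, _, h, _⟩ | ⟨p'', q'', h1, h2, h3⟩)
          · exact absurd h (by simp)
          · obtain rfl : q' = q'' := by simpa using h1
            obtain rfl : p = p'' := by simpa using h2
            exact h3
      · constructor
        · intro h
          exact Or.inl ⟨p', q, rfl, rfl, h⟩
        · rintro (⟨p'', q'', h1, h2, h3⟩ | ⟨_, _, h, _⟩)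
          · obtain rfl : q = q'' := by simpa using h1
            obtain rfl : p' = p'' := by simpa using h2
            exact h3
          · exact absurd h (by simp)
      · constructor
        · intro h; exact absurd h (by simp [GT])
        · rintro (⟨_, _, _, h, _⟩ | ⟨_, _, _, h, _⟩) <;> exact absurd h (by simp)
    · rintro (p | q)
      · convert Set.finite_empty
        ext y
        simp
      · set S : Set ℕ := {n | 1 ≤ n ∧ restr q.1 n ∈ T ∧ q.1 (n-1) = true} with hSdef
        have hS : S.Finite := by
          by_contra hSinf
          replace hSinf : S.Infinite := hSinf
          refine hno ⟨q.1, ?_, ?_⟩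
          · intro m
            obtain ⟨n, hn, hmn⟩ := hSinf.exists_gt m
            exact htree _ hn.2.1 _ (restr_prefix q.1 hmn.le)
          · refine (hSinf.image (f := fun n => n - 1) ?_).mono ?_
            · intro a ha b hb h
              have h' : a - 1 = b - 1 := h
              have ha1 := ha.1; have hb1 := hb.1
              omega
            · rintro m ⟨n, hn, rfl⟩
              exact hn.2.2
        set g : ℕ → XT := fun n => Sum.inl ⟨(restr q.1 n, restr q.2 n), by simp [restr_length]⟩
          with hgdef
        refine (hS.image g).subset ?_
        rintro y ⟨p, q', hq, rfl, hrel⟩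
        obtain rfl : q = q' := by simpa using hq
        obtain ⟨h1, h2, h3, h4, h5⟩ := hrel
        refine ⟨p.1.1.length, ⟨h2, ?_, ?_⟩, ?_⟩
        · rw [← h4]; exact h1
        · have h3' := h3
          rw [h4, getLast?_restr q.1 h2] at h3'
          simpa using h3'
        · simp only [hgdef]
          congr 1
          exact (Subtype.ext (Prod.ext h4 h5)).symm
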